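/- arXiv:math/0312105 — 3 statements merged into one kernel-verified Lean document; each statement's English description precedes it below -/
import Mathlib

section
/- If there exists w ∈ N(Ψ) ∩ W(Ψ') of order 2 with s(w) = −1, then e_{J,J'} = 0 in M^Ψ over any field, the coefficients cancelling in pairs. -/
open scoped Pointwise RealInnerProductSpace Classical

noncomputable section

variable {V : Type*} [NormedAddCommGroup V] [InnerProductSpace ℝ V]

/-- The reflection `τ_α` in the hyperplane orthogonal to `α` (the identity if `α = 0`):
`τ_α v = v - 2 (⟪α, v⟫ / ⟪α, α⟫) • α`. -/
def tau (α : V) : V ≃ₗ[ℝ] V :=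
  if hα : α = 0 then LinearEquiv.refl ℝ V
  else Module.reflection (f := (2 / ⟪α, α⟫) • (innerₛₗ ℝ α)) (x := α) (by
    have h : ⟪α, α⟫ ≠ 0 := inner_self_ne_zero.mpr hα
    simp only [LinearMap.smul_apply, innerₛₗ_apply_apply, smul_eq_mul]
    field_simp)

/-- The reflection group generated by the reflections `τ_α`, `α ∈ Φ`. -/
def WeylGroup (Φ : Set V) : Subgroup (V ≃ₗ[ℝ] V) :=
  Subgroup.closure (tau '' Φ)

variable (Φ : Set V)

/-- The reflection subgroup `W(S)` of `W(Φ)` generated by reflections in elements of `S`. -/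
def WeylSub (S : Set V) : Subgroup ↥(WeylGroup Φ) :=
  Subgroup.closure {w : ↥(WeylGroup Φ) | ∃ α ∈ S, (w : V ≃ₗ[ℝ] V) = tau α}

/-- `N(Ψ) = {w ∈ W | wΨ = Ψ}`, the setwise stabilizer of `Ψ` in the Weyl group. -/
def NSub (Ψ : Set V) : Subgroup ↥(WeylGroup Φ) :=
  MulAction.stabilizer ↥(WeylGroup Φ) Ψ

/-- `Φ` is a (not necessarily crystallographic) root system. -/
def IsRootSystem : Prop :=
  Φ.Finite ∧ (∀ α ∈ Φ, α ≠ 0) ∧ (∀ α ∈ Φ, -α ∈ Φ) ∧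
    (∀ α ∈ Φ, ∀ c : ℝ, c • α ∈ Φ → c = 1 ∨ c = -1) ∧
    ∀ α ∈ Φ, ∀ β ∈ Φ, tau α β ∈ Φ

/-- `Ψ` is a subsystem of `Φ`: a subset closed under its own reflections. -/
def IsSubsystem (Ψ : Set V) : Prop :=
  Ψ ⊆ Φ ∧ ∀ α ∈ Ψ, ∀ β ∈ Ψ, tau α β ∈ Ψ

/-- `Φp` is a positive system in `Φ`. -/
def IsPositiveSystem (Φp : Set V) : Prop :=
  Φp ⊆ Φ ∧ ∀ α ∈ Φ, (α ∈ Φp ↔ ¬ (-α ∈ Φp))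

/-- `J` is a simple system for the (sub)system `Ψ`: a linearly independent subset such that
every root of `Ψ` is a non-negative or non-positive combination of `J`. -/
def IsSimpleSystem (Ψ J : Set V) : Prop :=
  J ⊆ Ψ ∧ LinearIndependent ℝ ((↑) : J → V) ∧
    ∀ α ∈ Ψ, ∃ f : V →₀ ℝ, ↑f.support ⊆ J ∧
      ((∀ v, 0 ≤ f v) ∨ (∀ v, f v ≤ 0)) ∧ α = f.sum fun v c => c • v

/-- `Ψ^⊥`: the largest subsystem of `Φ` orthogonal to `Ψ`. -/
def perp (Ψ : Set V) : Set V := {α ∈ Φ | ∀ β ∈ Ψ, ⟪α, β⟫ = 0}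

/-- `{J, J'}` is a useful sub-system: `N(Ψ) ∩ W(Ψ') = 1` and `W(Ψ^⊥) ∩ W(Ψ'^⊥) = 1`. -/
def UsefulSubSystem (Ψ Ψ' : Set V) : Prop :=
  NSub Φ Ψ ⊓ WeylSub Φ Ψ' = ⊥ ∧ WeylSub Φ (perp Φ Ψ) ⊓ WeylSub Φ (perp Φ Ψ') = ⊥

variable (K : Type*) [Field K]

/-- The set of Δ*-tabloids: left cosets of `N(Ψ)` in `W`. -/
abbrev Tab (Ψ : Set V) := ↥(WeylGroup Φ) ⧸ NSub Φ Ψ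

/-- The permutation module `M^Ψ` with basis the Δ*-tabloids. -/
abbrev MPsi (Ψ : Set V) := Tab Φ Ψ →₀ K

/-- The action of `w ∈ W` on `M^Ψ`, permuting the tabloid basis. -/
def act {Ψ : Set V} (w : ↥(WeylGroup Φ)) (m : MPsi Φ K Ψ) : MPsi Φ K Ψ :=
  Finsupp.mapDomain (fun t => w • t) m

/-- The sign `s(w) = (-1)^{ℓ(w)} = det w`, viewed in the field `K`. -/
def sgn (w : ↥(WeylGroup Φ)) : K :=
  if LinearMap.det ((w : V ≃ₗ[ℝ] V) : V →ₗ[ℝ] V) = 1 then 1 else -1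

/-- `κ_{J'} = Σ_{σ ∈ W(Ψ')} s(σ) σ`, acting on `M^Ψ`. -/
def kappa (Ψ Ψ' : Set V) (m : MPsi Φ K Ψ) : MPsi Φ K Ψ :=
  ∑ᶠ σ ∈ (WeylSub Φ Ψ' : Set ↥(WeylGroup Φ)), sgn Φ K σ • act Φ K σ m

/-- The generalized Δ*-polytabloid `e_{J,J'} = κ_{J'} {J}`. -/
def polytabloid (Ψ Ψ' : Set V) : MPsi Φ K Ψ :=
  kappa Φ K Ψ Ψ' (Finsupp.single (QuotientGroup.mk 1) 1)

/-- A good sub-system: a useful sub-system such that whenever `dΨ ∩ Ψ' = ∅`, the tabloid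
`{dJ}` appears with non-zero coefficient in `e_{J,J'}`. -/
def GoodSubSystem (Ψ Ψ' : Set V) : Prop :=
  UsefulSubSystem Φ Ψ Ψ' ∧
    ∀ d : ↥(WeylGroup Φ), (d • Ψ) ∩ Ψ' = ∅ →
      polytabloid Φ K Ψ Ψ' (QuotientGroup.mk d) ≠ 0

/-- The submodule of the generalized Specht module: span of all `w·e_{J,J'}`. -/
def SpechtSub (Ψ Ψ' : Set V) : Submodule K (MPsi Φ K Ψ) :=
  Submodule.span K (Set.range fun w : ↥(WeylGroup Φ) => act Φ K w (polytabloid Φ K Ψ Ψ'))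

/-- The standard bilinear form on `M^Ψ` for which the tabloids are orthonormal. -/
def Bform (Ψ : Set V) : MPsi Φ K Ψ →ₗ[K] MPsi Φ K Ψ →ₗ[K] K :=
  Finsupp.lsum K fun t => LinearMap.toSpanSingleton K _ (Finsupp.lapply t)

/-- The orthogonal complement `S^{Ψ,Ψ'⊥}` of the Specht submodule in `M^Ψ`. -/
def SpechtPerp (Ψ Ψ' : Set V) : Submodule K (MPsi Φ K Ψ) :=
  ⨅ y ∈ SpechtSub Φ K Ψ Ψ', LinearMap.ker ((Bform Φ K Ψ).flip y)

theorem statement5 (Ψ Ψ' J J' Φp : Set V) [Finite ↥(WeylGroup Φ)]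
    (hPhi : IsRootSystem Φ) (hPsi : IsSubsystem Φ Ψ) (hPsi' : IsSubsystem Φ Ψ')
    (hdisj : Ψ' ⊆ Φ \ Ψ) (hpos : IsPositiveSystem Φ Φp)
    (hJ : IsSimpleSystem Ψ J) (hJ' : IsSimpleSystem Ψ' J')
    (hJp : J ⊆ Φp) (hJ'p : J' ⊆ Φp)
    (w : ↥(WeylGroup Φ)) (hw : w ∈ NSub Φ Ψ ⊓ WeylSub Φ Ψ')
    (hord : orderOf w = 2)
    (hsgn : LinearMap.det ((w : V ≃ₗ[ℝ] V) : V →ₗ[ℝ] V) = -1) :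
    polytabloid Φ K Ψ Ψ' = 0 := by
  classical
  obtain ⟨hwN, hwW⟩ := hw
  haveI : Fintype ↥(WeylGroup Φ) := Fintype.ofFinite _
  -- w ≠ 1 and w * w = 1
  have hw_ne : w ≠ 1 := by
    intro h
    rw [h, orderOf_one] at hord
    exact absurd hord (by norm_num)
  have hww : w * w = 1 := by
    have := pow_orderOf_eq_one w
    rwa [hord, pow_two] at this
  -- determinants of Weyl group elements are ±1
  have hdet : ∀ u : V ≃ₗ[ℝ] V, u ∈ WeylGroup Φ →
      LinearMap.det (u : V →ₗ[ℝ] V) = 1 ∨ LinearMap.det (u : V →ₗ[ℝ] V) = -1 := by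
    intro u hu
    have comp_eq : ∀ a b : V ≃ₗ[ℝ] V,
        ((a * b : V ≃ₗ[ℝ] V) : V →ₗ[ℝ] V) = (a : V →ₗ[ℝ] V) ∘ₗ (b : V →ₗ[ℝ] V) := by
      intro a b; rfl
    induction hu using Subgroup.closure_induction with
    | mem x hx =>
        obtain ⟨α, -, rfl⟩ := hx
        have hinv : tau α * tau α = 1 := by
          unfold tau
          split_ifs with hα
          · rfl
          · ext v
            exact Module.involutive_reflection (f := (2 / ⟪α, α⟫) • (innerₛₗ ℝ α)) (x := α)
              (by
                have h : ⟪α, α⟫ ≠ 0 := inner_self_ne_zero.mpr hα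
                simp only [LinearMap.smul_apply, innerₛₗ_apply_apply, smul_eq_mul]
                field_simp) v
        have : LinearMap.det ((tau α : V →ₗ[ℝ] V)) *
            LinearMap.det ((tau α : V →ₗ[ℝ] V)) = 1 := by
          rw [← LinearMap.det_comp, ← comp_eq, hinv]
          simp
        exact mul_self_eq_one_iff.mp this
    | one => simp
    | mul a b ha hb iha ihb =>
        rw [comp_eq a b, LinearMap.det_comp]
        rcases iha with h1 | h1 <;> rcases ihb with h2 | h2 <;> rw [h1, h2] <;> norm_num
    | inv a ha iha =>
        have : LinearMap.det ((a : V →ₗ[ℝ] V)) *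
            LinearMap.det ((a⁻¹ : V ≃ₗ[ℝ] V) : V →ₗ[ℝ] V) = 1 := by
          rw [← LinearMap.det_comp, ← comp_eq, mul_inv_cancel]
          simp
        rcases iha with h1 | h1 <;> rw [h1] at this
        · left; linarith
        · right; linarith
  -- sign relation: sgn (σ * w) = - sgn σ
  have hsgn_mul : ∀ σ : ↥(WeylGroup Φ), sgn Φ K σ + sgn Φ K (σ * w) = 0 := by
    intro σ
    have hdetmul : LinearMap.det (((σ * w : ↥(WeylGroup Φ)) : V ≃ₗ[ℝ] V) : V →ₗ[ℝ] V)
        = LinearMap.det ((σ : V ≃ₗ[ℝ] V) : V →ₗ[ℝ] V) * (-1) := by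
      have : (((σ * w : ↥(WeylGroup Φ)) : V ≃ₗ[ℝ] V) : V →ₗ[ℝ] V)
          = ((σ : V ≃ₗ[ℝ] V) : V →ₗ[ℝ] V) ∘ₗ ((w : V ≃ₗ[ℝ] V) : V →ₗ[ℝ] V) := rfl
      rw [this, LinearMap.det_comp, hsgn]
    rcases hdet _ σ.2 with h1 | h1
    · rw [sgn, sgn, if_pos h1, if_neg (by rw [hdetmul, h1]; norm_num)]
      ring
    · rw [sgn, sgn, if_neg (by rw [h1]; norm_num), if_pos (by rw [hdetmul, h1]; norm_num)]
      ring
  -- expand the polytabloid as a finite sum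
  rw [polytabloid, kappa]
  have hact : ∀ σ : ↥(WeylGroup Φ),
      sgn Φ K σ • act Φ K σ (Finsupp.single (QuotientGroup.mk 1) (1 : K))
        = Finsupp.single (QuotientGroup.mk (s := NSub Φ Ψ) σ) (sgn Φ K σ) := by
    intro σ
    rw [act, Finsupp.mapDomain_single, Finsupp.smul_single, smul_eq_mul, mul_one]
    congr 1
  have hcoe : (WeylSub Φ Ψ' : Set ↥(WeylGroup Φ))
      = ((WeylSub Φ Ψ' : Set ↥(WeylGroup Φ)).toFinset : Set ↥(WeylGroup Φ)) := by
    simp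
  rw [hcoe, finsum_mem_coe_finset]
  calc ∑ σ ∈ (WeylSub Φ Ψ' : Set ↥(WeylGroup Φ)).toFinset,
        sgn Φ K σ • act Φ K σ (Finsupp.single (QuotientGroup.mk 1) (1 : K))
      = ∑ σ ∈ (WeylSub Φ Ψ' : Set ↥(WeylGroup Φ)).toFinset,
        Finsupp.single (QuotientGroup.mk (s := NSub Φ Ψ) σ) (sgn Φ K σ) :=
        Finset.sum_congr rfl fun σ _ => hact σ
    _ = 0 := by
        apply Finset.sum_involution (g := fun σ _ => σ * w)
        · intro σ _
          have hmk : QuotientGroup.mk (s := NSub Φ Ψ) (σ * w)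
              = QuotientGroup.mk (s := NSub Φ Ψ) σ :=
            QuotientGroup.mk_mul_of_mem σ hwN
          rw [hmk, ← Finsupp.single_add, hsgn_mul σ, Finsupp.single_zero]
        · intro σ _ _ h
          exact hw_ne (by simpa using congrArg (fun x => σ⁻¹ * x) h)
        · intro σ hσ
          rw [Set.mem_toFinset] at hσ ⊢
          exact mul_mem hσ hwW
        · intro σ hσ
          rw [mul_assoc, hww, mul_one]

end
end

section
/- Let {J, J'} be a useful sub-system in Φ and d ∈ E_Ψ (a set of left coset representatives of N(Ψ) in W). The following are equivalent: (i) the tabloid {dJ} appears with non-zero coefficient in e_{J,J'}; (ii) there exists σ ∈ W(Ψ') with σ{J} = {dJ}; (iii) there exist ρ ∈ N(Ψ) and σ ∈ W(Ψ') such that d = σρ. -/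
open scoped Pointwise RealInnerProductSpace Classical

noncomputable section

variable {V : Type*} [NormedAddCommGroup V] [InnerProductSpace ℝ V]

variable (Φ : Set V)

variable (K : Type*) [Field K]

/-!
The coefficient of a tabloid `t` in `e_{J,J'}` is the sum of `s(σ)` over the `σ ∈ W(Ψ')` with
`σ N(Ψ) = t`. Since `N(Ψ) ∩ W(Ψ') = 1`, distinct elements of `W(Ψ')` lie in distinct cosets of
`N(Ψ)`, so this sum has at most one term, which is a sign `±1`.
-/

section

variable {G : Type*} [Group G] {N H : Subgroup G}

theorem QuotientGroup.injOn_mk_of_inf_eq_bot (hNH : N ⊓ H = ⊥) :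
    Set.InjOn (QuotientGroup.mk : G → G ⧸ N) H := by
  intro σ hσ σ' hσ' he
  have hmem : σ⁻¹ * σ' ∈ N ⊓ H := ⟨QuotientGroup.eq.mp he, H.mul_mem (H.inv_mem hσ) hσ'⟩
  rwa [hNH, Subgroup.mem_bot, inv_mul_eq_one] at hmem

theorem QuotientGroup.exists_mem_mk_eq_iff (d : G) :
    (∃ σ ∈ H, (σ : G ⧸ N) = d) ↔ ∃ ρ ∈ N, ∃ σ ∈ H, d = σ * ρ := by
  constructor
  · rintro ⟨σ, hσ, he⟩
    exact ⟨σ⁻¹ * d, QuotientGroup.eq.mp he, σ, hσ, (mul_inv_cancel_left σ d).symm⟩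
  · rintro ⟨ρ, hρ, σ, hσ, rfl⟩
    exact ⟨σ, hσ, QuotientGroup.eq.mpr (by rwa [inv_mul_cancel_left])⟩

end

theorem sgn_ne_zero (w : ↥(WeylGroup Φ)) : sgn Φ K w ≠ 0 := by
  unfold sgn
  split_ifs
  exacts [one_ne_zero, neg_ne_zero.mpr one_ne_zero]

theorem act_single {Ψ : Set V} (w : ↥(WeylGroup Φ)) (t : Tab Φ Ψ) (c : K) :
    act Φ K w (Finsupp.single t c) = Finsupp.single (w • t) c :=
  Finsupp.mapDomain_single

theorem polytabloid_apply [Finite ↥(WeylGroup Φ)] (Ψ Ψ' : Set V) (t : Tab Φ Ψ) :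
    polytabloid Φ K Ψ Ψ' t =
      ∑ᶠ σ ∈ {σ ∈ (WeylSub Φ Ψ' : Set ↥(WeylGroup Φ)) | (σ : Tab Φ Ψ) = t}, sgn Φ K σ := by
  rw [polytabloid, kappa, ← Finsupp.applyAddHom_apply,
    AddMonoidHom.map_finsum_mem _ _ (Set.toFinite _)]
  refine finsum_congr fun σ => ?_
  simp only [Finsupp.applyAddHom_apply, Finsupp.smul_apply, act_single, Finsupp.single_apply,
    MulAction.Quotient.smul_coe, smul_eq_mul, mul_one, mul_ite, mul_zero, Set.mem_sep_iff,
    finsum_eq_if, ite_and]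

theorem polytabloid_apply_ne_zero_iff [Finite ↥(WeylGroup Φ)] {Ψ Ψ' : Set V}
    (hNW : NSub Φ Ψ ⊓ WeylSub Φ Ψ' = ⊥) (t : Tab Φ Ψ) :
    polytabloid Φ K Ψ Ψ' t ≠ 0 ↔ ∃ σ ∈ WeylSub Φ Ψ', (σ : Tab Φ Ψ) = t := by
  rw [polytabloid_apply]
  constructor
  · contrapose!
    exact fun hnone => finsum_mem_of_eqOn_zero fun σ hσ => (hnone σ hσ.1 hσ.2).elim
  · rintro ⟨σ, hσ, rfl⟩
    have hfiber : {σ' ∈ (WeylSub Φ Ψ' : Set ↥(WeylGroup Φ)) | (σ' : Tab Φ Ψ) = σ} = {σ} :=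
      Set.eq_singleton_iff_unique_mem.mpr
        ⟨⟨hσ, rfl⟩, fun σ' hσ' => QuotientGroup.injOn_mk_of_inf_eq_bot hNW hσ'.1 hσ hσ'.2⟩
    rw [hfiber, finsum_mem_singleton]
    exact sgn_ne_zero Φ K σ

theorem statement6 (Ψ Ψ' : Set V) [Finite ↥(WeylGroup Φ)]
    (h : UsefulSubSystem Φ Ψ Ψ') (d : ↥(WeylGroup Φ)) :
    (polytabloid Φ K Ψ Ψ' (QuotientGroup.mk d) ≠ 0 ↔
      ∃ σ ∈ WeylSub Φ Ψ', (QuotientGroup.mk σ : Tab Φ Ψ) = QuotientGroup.mk d) ∧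
    (polytabloid Φ K Ψ Ψ' (QuotientGroup.mk d) ≠ 0 ↔
      ∃ ρ ∈ NSub Φ Ψ, ∃ σ ∈ WeylSub Φ Ψ', d = σ * ρ) := by
  have hcoeff := polytabloid_apply_ne_zero_iff Φ K h.1 (QuotientGroup.mk d)
  exact ⟨hcoeff, hcoeff.trans (QuotientGroup.exists_mem_mk_eq_iff d)⟩

end
end

section
/- If {J, J₁'} and {J, J₂'} are useful sub-systems in Φ with Ψ₁' ⊆ Ψ₂', then S^{Ψ,Ψ₂'} is a KW-submodule of S^{Ψ,Ψ₁'}. -/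
open scoped Pointwise RealInnerProductSpace Classical

noncomputable section

variable {V : Type*} [NormedAddCommGroup V] [InnerProductSpace ℝ V]

variable (Φ : Set V)

variable (K : Type*) [Field K]

/-!
Since `Ψ₁' ⊆ Ψ₂'`, `W(Ψ₁') ≤ W(Ψ₂')`. Splitting `W(Ψ₂')` into left cosets `d W(Ψ₁')` and using
that the sign is multiplicative gives `κ_{J₂'} = Σ_d s(d) d κ_{J₁'}`, so `e_{J,J₂'}` is a
combination of translates of `e_{J,J₁'}`. The span of the `W`-translates of `e_{J,J₁'}` is
`W`-stable, hence contains every `w e_{J,J₂'}`.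
-/

theorem QuotientGroup.bijective_out_mul {G : Type*} [Group G] (H : Subgroup G) :
    Function.Bijective fun p : (G ⧸ H) × H => p.1.out * p.2 := by
  have mk_out_mul (q : G ⧸ H) (h : H) : (QuotientGroup.mk (q.out * h) : G ⧸ H) = q := by
    rw [QuotientGroup.mk_mul_of_mem _ h.2, QuotientGroup.out_eq']
  refine ⟨fun ⟨q, h⟩ ⟨q', h'⟩ heq => ?_, fun g => ?_⟩
  · obtain rfl : q = q' := by
      simpa only [mk_out_mul] using congrArg (QuotientGroup.mk : G → G ⧸ H) heq
    exact Prod.ext rfl (Subtype.ext (mul_left_cancel heq))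
  · exact ⟨(g, ⟨(g : G ⧸ H).out⁻¹ * g, QuotientGroup.eq.mp (QuotientGroup.out_eq' _)⟩),
      mul_inv_cancel_left _ _⟩

theorem Subgroup.sum_eq_sum_quotient_out_mul {G M : Type*} [Group G] [AddCommMonoid M]
    {H₁ H₂ : Subgroup G} [Fintype H₁] [Fintype H₂] (hle : H₁ ≤ H₂) (f : G → M) :
    ∑ σ : H₂, f σ = ∑ q : H₂ ⧸ H₁.subgroupOf H₂, ∑ τ : H₁, f (q.out * τ) := by
  rw [← Fintype.sum_bijective _ (QuotientGroup.bijective_out_mul (H₁.subgroupOf H₂)) _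
    (fun σ : H₂ => f σ) fun _ => rfl, Fintype.sum_prod_type]
  refine Finset.sum_congr rfl fun q _ => ?_
  exact Fintype.sum_equiv (Subgroup.subgroupOfEquivOfLe hle).toEquiv _ _ fun _ => rfl

theorem weylSub_mono {S T : Set V} (hST : S ⊆ T) : WeylSub Φ S ≤ WeylSub Φ T :=
  Subgroup.closure_mono fun _ ⟨α, hα, hw⟩ => ⟨α, hST hα, hw⟩

theorem tau_mul_self (α : V) : tau α * tau α = 1 := by
  ext v
  unfold tau
  split_ifs
  · rfl
  · exact Module.involutive_reflection _ v

theorem weylGroup_le_ker_det_sq :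
    WeylGroup Φ ≤ ((powMonoidHom 2).comp (LinearEquiv.det (R := ℝ) (M := V))).ker := by
  refine Subgroup.closure_le _ |>.mpr ?_
  rintro _ ⟨α, -, rfl⟩
  simp only [SetLike.mem_coe, MonoidHom.mem_ker, MonoidHom.comp_apply, powMonoidHom_apply, sq,
    ← map_mul, tau_mul_self, map_one]

theorem det_weylGroup_eq_one_or_neg_one (w : WeylGroup Φ) :
    LinearMap.det ((w : V ≃ₗ[ℝ] V) : V →ₗ[ℝ] V) = 1 ∨
      LinearMap.det ((w : V ≃ₗ[ℝ] V) : V →ₗ[ℝ] V) = -1 := by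
  have hw : LinearEquiv.det (w : V ≃ₗ[ℝ] V) ^ 2 = 1 := weylGroup_le_ker_det_sq Φ w.2
  rw [← LinearEquiv.coe_det, ← sq_eq_one_iff, ← Units.val_pow_eq_pow_val, hw, Units.val_one]

theorem sgn_mul (w σ : WeylGroup Φ) : sgn Φ K (w * σ) = sgn Φ K w * sgn Φ K σ := by
  have hdet : LinearMap.det (((w * σ : WeylGroup Φ) : V ≃ₗ[ℝ] V) : V →ₗ[ℝ] V) =
      LinearMap.det ((w : V ≃ₗ[ℝ] V) : V →ₗ[ℝ] V) *
        LinearMap.det ((σ : V ≃ₗ[ℝ] V) : V →ₗ[ℝ] V) := by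
    simp only [← LinearEquiv.coe_det, Subgroup.coe_mul, map_mul, Units.val_mul]
  unfold sgn
  rw [hdet]
  rcases det_weylGroup_eq_one_or_neg_one Φ w with hw | hw <;>
    rcases det_weylGroup_eq_one_or_neg_one Φ σ with hσ | hσ <;> norm_num [hw, hσ]

theorem act_mul {Ψ : Set V} (w σ : WeylGroup Φ) (m : MPsi Φ K Ψ) :
    act Φ K (w * σ) m = act Φ K w (act Φ K σ m) := by
  simp only [act, ← Finsupp.mapDomain_comp, Function.comp_def, mul_smul]

theorem act_smul {Ψ : Set V} (w : WeylGroup Φ) (c : K) (m : MPsi Φ K Ψ) :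
    act Φ K w (c • m) = c • act Φ K w m :=
  Finsupp.mapDomain_smul c m

theorem act_sum {Ψ : Set V} {ι : Type*} (w : WeylGroup Φ) (s : Finset ι)
    (f : ι → MPsi Φ K Ψ) : act Φ K w (∑ i ∈ s, f i) = ∑ i ∈ s, act Φ K w (f i) :=
  Finsupp.mapDomain_finsetSum

theorem act_mem_spechtSub {Ψ Ψ' : Set V} (w : WeylGroup Φ) {x : MPsi Φ K Ψ}
    (hx : x ∈ SpechtSub Φ K Ψ Ψ') : act Φ K w x ∈ SpechtSub Φ K Ψ Ψ' := by
  have hle : SpechtSub Φ K Ψ Ψ' ≤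
      (SpechtSub Φ K Ψ Ψ').comap (Finsupp.lmapDomain K K (w • · : Tab Φ Ψ → Tab Φ Ψ)) := by
    refine Submodule.span_le.mpr ?_
    rintro _ ⟨u, rfl⟩
    exact Submodule.subset_span ⟨w * u, act_mul Φ K w u _⟩
  exact hle hx

theorem spechtSub_le_of_polytabloid_mem {Ψ Ψ₁' Ψ₂' : Set V}
    (h : polytabloid Φ K Ψ Ψ₂' ∈ SpechtSub Φ K Ψ Ψ₁') :
    SpechtSub Φ K Ψ Ψ₂' ≤ SpechtSub Φ K Ψ Ψ₁' :=
  Submodule.span_le.mpr <| Set.range_subset_iff.mpr fun w => act_mem_spechtSub Φ K w h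

theorem kappa_eq_sum [Fintype (WeylGroup Φ)] (Ψ Ψ' : Set V) (m : MPsi Φ K Ψ) :
    kappa Φ K Ψ Ψ' m = ∑ σ : WeylSub Φ Ψ', sgn Φ K σ • act Φ K σ m := by
  rw [kappa, ← finsum_set_coe_eq_finsum_mem, finsum_eq_sum_of_fintype]
  rfl

theorem kappa_eq_sum_quotient_out [Fintype (WeylGroup Φ)] {Ψ Ψ₁' Ψ₂' : Set V}
    (hle : WeylSub Φ Ψ₁' ≤ WeylSub Φ Ψ₂') (m : MPsi Φ K Ψ) :
    kappa Φ K Ψ Ψ₂' m = ∑ q : WeylSub Φ Ψ₂' ⧸ (WeylSub Φ Ψ₁').subgroupOf (WeylSub Φ Ψ₂'),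
      sgn Φ K q.out • act Φ K q.out (kappa Φ K Ψ Ψ₁' m) := by
  rw [kappa_eq_sum, kappa_eq_sum,
    Subgroup.sum_eq_sum_quotient_out_mul hle fun σ => sgn Φ K σ • act Φ K σ m]
  refine Finset.sum_congr rfl fun q _ => ?_
  simp only [act_sum, act_smul, Finset.smul_sum, sgn_mul, act_mul, mul_smul]

theorem polytabloid_mem_spechtSub_of_le [Finite (WeylGroup Φ)] {Ψ Ψ₁' Ψ₂' : Set V}
    (hle : WeylSub Φ Ψ₁' ≤ WeylSub Φ Ψ₂') :
    polytabloid Φ K Ψ Ψ₂' ∈ SpechtSub Φ K Ψ Ψ₁' := by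
  have := Fintype.ofFinite (WeylGroup Φ)
  rw [polytabloid, kappa_eq_sum_quotient_out Φ K hle]
  exact Submodule.sum_mem _ fun q _ =>
    Submodule.smul_mem _ _ (Submodule.subset_span ⟨q.out, rfl⟩)

theorem statement14 (Ψ Ψ₁' Ψ₂' : Set V) [Finite ↥(WeylGroup Φ)]
    (hsub : Ψ₁' ⊆ Ψ₂') :
    SpechtSub Φ K Ψ Ψ₂' ≤ SpechtSub Φ K Ψ Ψ₁' :=
  spechtSub_le_of_polytabloid_mem Φ K (polytabloid_mem_spechtSub_of_le Φ K (weylSub_mono Φ hsub))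

end
end
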